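/- Let i > 0 and let α and β be nodes of T̄_i such that α is a proper descendant of β. Then link(α) is a proper descendant of link(β); if val(link(β)) is nonempty, its last symbol differs from the first symbol of val(link(β), link(α)); and |RLE(val(link(β), link(α)))| ≥ |val(β, α)|. -/

import Mathlib

namespace DynStr

/-- The set `𝒮` of symbols over the alphabet `α`:
base letters, pairing symbols `(S₁,S₂)` and power symbols `(S,k)`. -/
inductive Sym (α : Type) : Type where
  | base : α → Sym α
  | pair : Sym α → Sym α → Sym α
  | pow  : Sym α → ℕ → Sym α
deriving DecidableEq

variable {α : Type} [DecidableEq α]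

/-- The string over `Σ` generated by a symbol. -/
def strSym : Sym α → List α
  | .base a => [a]
  | .pair s t => strSym s ++ strSym t
  | .pow s k => (List.replicate k (strSym s)).flatten

/-- Run-length pairs: the maximal blocks of equal elements, with multiplicities. -/
def runs {β : Type} [DecidableEq β] : List β → List (β × ℕ)
  | [] => []
  | a :: l =>
    match runs l with
    | [] => [(a, 1)]
    | (b, k) :: rest => if a = b then (b, k + 1) :: rest else (a, 1) :: (b, k) :: rest

/-- `|RLE(w)|`: the number of blocks in the run-length encoding of `w`. -/
def rleLen {β : Type} [DecidableEq β] (w : List β) : ℕ := (runs w).length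

/-- The `Rle` function: replace every maximal block `S^k` with `k ≥ 2` by `(S,k)`. -/
def rle : List (Sym α) → List (Sym α) :=
  fun w => (runs w).map fun p => if 2 ≤ p.2 then Sym.pow p.1 p.2 else p.1

/-- `Compressᵢ` with bit function `g`: replace every (disjoint, greedily-from-the-left
determined, i.e. uniquely determined) adjacent pair `S S'` with `g S = 0`, `g S' = 1`
by the symbol `(S,S')`. -/
def compress (g : Sym α → Bool) : List (Sym α) → List (Sym α)
  | [] => []
  | [a] => [a]
  | a :: b :: l =>
    if g a = false ∧ g b = true then Sym.pair a b :: compress g l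
    else a :: compress g (b :: l)

/-- `shrinkᵢ` (for `i ≥ 1`): `Rle` for odd `i`, `Compress_{i/2}` for even `i`. -/
def shrinkStep (h : ℕ → Sym α → Bool) (i : ℕ) (w : List (Sym α)) : List (Sym α) :=
  if i % 2 = 1 then rle w else compress (h (i / 2)) w

/-- `shrink^i`, the iterated parsing function. -/
def shrinkIter (h : ℕ → Sym α → Bool) : ℕ → List (Sym α) → List (Sym α)
  | 0, w => w
  | i + 1, w => shrinkStep h (i + 1) (shrinkIter h i w)

/-- `Depth(w)`: the least `i` with `|shrink^i(w)| = 1`. -/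
noncomputable def depth (h : ℕ → Sym α → Bool) (w : List (Sym α)) : ℕ :=
  sInf {i | (shrinkIter h i w).length = 1}

/-- A string over `Σ` viewed as a string of (base) symbols. -/
def embed (w : List α) : List (Sym α) := w.map Sym.base

/-- Sizes of the blocks formed by `Compress` with bit function `g`. -/
def compBlocks (g : Sym α → Bool) : List (Sym α) → List ℕ
  | [] => []
  | [_] => [1]
  | a :: b :: l =>
    if g a = false ∧ g b = true then 2 :: compBlocks g l
    else 1 :: compBlocks g (b :: l)

/-- Sizes of the blocks formed by `shrinkᵢ`. -/
def stepBlocks (h : ℕ → Sym α → Bool) (i : ℕ) (w : List (Sym α)) : List ℕ :=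
  if i % 2 = 1 then (runs w).map Prod.snd else compBlocks (h (i / 2)) w

/-- Sizes of the blocks formed when passing from level `l` to level `l+1` of the
uncompressed parse tree of `w`. -/
def blocksAt (h : ℕ → Sym α → Bool) (w : List (Sym α)) (l : ℕ) : List ℕ :=
  stepBlocks h (l + 1) (shrinkIter h l w)

/-- Index of the block (in a list of block sizes) containing position `j`. -/
def blockOf : List ℕ → ℕ → ℕ
  | [], _ => 0
  | b :: bs, j => if j < b then 0 else blockOf bs (j - b) + 1

/-- A node of the uncompressed parse tree `T̄(w)`: the `idx`-th symbol occurrence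
(0-indexed) of `shrink^level(w)`. -/
structure TNode where
  level : ℕ
  idx : ℕ
deriving DecidableEq

/-- `v` is an actual node of `T̄(w)`. -/
def IsNode (h : ℕ → Sym α → Bool) (w : List (Sym α)) (v : TNode) : Prop :=
  v.level ≤ depth h w ∧ v.idx < (shrinkIter h v.level w).length

/-- The signature (symbol) of a node. -/
def sigAt (h : ℕ → Sym α → Bool) (w : List (Sym α)) (v : TNode) : Option (Sym α) :=
  (shrinkIter h v.level w)[v.idx]?

/-- Index in `w` (i.e. on level 0) of the first position below the `j`-th symbol of
`shrink^l(w)`. -/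
def startIdx (h : ℕ → Sym α → Bool) (w : List (Sym α)) : ℕ → ℕ → ℕ
  | 0, j => j
  | l + 1, j => startIdx h w l (((blocksAt h w l).take j).sum)

/-- The first level-0 position of the fragment represented by `v`. -/
def begIdx (h : ℕ → Sym α → Bool) (w : List (Sym α)) (v : TNode) : ℕ :=
  startIdx h w v.level v.idx

/-- One past the last level-0 position of the fragment represented by `v`. -/
def endIdx (h : ℕ → Sym α → Bool) (w : List (Sym α)) (v : TNode) : ℕ :=
  startIdx h w v.level (v.idx + 1)

/-- `par(v)`. -/
def parNode (h : ℕ → Sym α → Bool) (w : List (Sym α)) (v : TNode) : TNode :=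
  ⟨v.level + 1, blockOf (blocksAt h w v.level) v.idx⟩

/-- The parent of `v` exists in `T̄(w)`. -/
def HasPar (h : ℕ → Sym α → Bool) (w : List (Sym α)) (v : TNode) : Prop :=
  IsNode h w v ∧ v.level < depth h w

/-- The number of children of `v` (for `v.level ≥ 1`). -/
def degree (h : ℕ → Sym α → Bool) (w : List (Sym α)) (v : TNode) : ℕ :=
  (blocksAt h w (v.level - 1)).getD v.idx 0

/-- `child(v,k)`, the `k`-th child of `v` (`k` is 1-indexed). -/
def childNode (h : ℕ → Sym α → Bool) (w : List (Sym α)) (v : TNode) (k : ℕ) : TNode :=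
  ⟨v.level - 1, ((blocksAt h w (v.level - 1)).take v.idx).sum + (k - 1)⟩

/-- The `k`-th child of `v` exists in `T̄(w)`. -/
def HasChild (h : ℕ → Sym α → Bool) (w : List (Sym α)) (v : TNode) (k : ℕ) : Prop :=
  IsNode h w v ∧ 1 ≤ v.level ∧ 1 ≤ k ∧ k ≤ degree h w v

/-- `left(v)`. -/
def leftNode (v : TNode) : TNode := ⟨v.level, v.idx - 1⟩

/-- `right(v)`. -/
def rightNode (v : TNode) : TNode := ⟨v.level, v.idx + 1⟩

/-- `left(v)` exists in `T̄(w)`. -/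
def HasLeft (h : ℕ → Sym α → Bool) (w : List (Sym α)) (v : TNode) : Prop :=
  IsNode h w v ∧ 1 ≤ v.idx

/-- `right(v)` exists in `T̄(w)`. -/
def HasRight (h : ℕ → Sym α → Bool) (w : List (Sym α)) (v : TNode) : Prop :=
  IsNode h w v ∧ v.idx + 1 < (shrinkIter h v.level w).length

/-- `v'` is the counterpart (`v ≈ v'`) of the node `v` of `T̄(w)` with respect to the
extension `x·w·y`: a node of `T̄(xwy)` of the same level with the same signature,
representing the fragment of `xwy` naturally corresponding to the fragment of `w`
represented by `v`. -/
def Counterpart (h : ℕ → Sym α → Bool) (x w y : List α) (v v' : TNode) : Prop :=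
  IsNode h (embed (x ++ w ++ y)) v' ∧
  v'.level = v.level ∧
  sigAt h (embed (x ++ w ++ y)) v' = sigAt h (embed w) v ∧
  begIdx h (embed (x ++ w ++ y)) v' = x.length + begIdx h (embed w) v ∧
  endIdx h (embed (x ++ w ++ y)) v' = x.length + endIdx h (embed w) v

/-- `v` is preserved in the extension `x·w·y`. -/
def Preserved (h : ℕ → Sym α → Bool) (x w y : List α) (v : TNode) : Prop :=
  ∃ v', Counterpart h x w y v v'

/-- `v` is right context-insensitive: preserved in every right extension. -/
def RightCI (h : ℕ → Sym α → Bool) (w : List α) (v : TNode) : Prop :=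
  ∀ y : List α, Preserved h [] w y v

/-- `v` is left context-insensitive: preserved in every left extension. -/
def LeftCI (h : ℕ → Sym α → Bool) (w : List α) (v : TNode) : Prop :=
  ∀ x : List α, Preserved h x w [] v

/-- `v` is context-insensitive: preserved in every extension. -/
def ContextIns (h : ℕ → Sym α → Bool) (w : List α) (v : TNode) : Prop :=
  ∀ x y : List α, Preserved h x w y v

/-- `u` is a (not necessarily proper) ancestor of `v` in `T̄(w)`. -/
def Ancestor (h : ℕ → Sym α → Bool) (w : List (Sym α)) (u v : TNode) : Prop :=
  v.level ≤ u.level ∧ begIdx h w u ≤ begIdx h w v ∧ endIdx h w v ≤ endIdx h w u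

/-- `u` is a proper ancestor of `v`. -/
def ProperAnc (h : ℕ → Sym α → Bool) (w : List (Sym α)) (u v : TNode) : Prop :=
  Ancestor h w u v ∧ u ≠ v

/-- The fragments of the listed nodes tile `w[a..]` consecutively from left to right. -/
def chainFrom (h : ℕ → Sym α → Bool) (w : List (Sym α)) : ℕ → List TNode → Prop
  | a, [] => a = w.length
  | a, v :: L => begIdx h w v = a ∧ chainFrom h w (endIdx h w v) L

/-- `L` is a layer of the uncompressed parse tree `T̄(w)`, listed from left to right:
every leaf has exactly one ancestor in `L` (equivalently, the fragments of
the nodes of `L` tile `w`). -/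
def IsBarLayer (h : ℕ → Sym α → Bool) (w : List (Sym α)) (L : List TNode) : Prop :=
  (∀ v ∈ L, IsNode h w v) ∧ chainFrom h w 0 L

/-- `v` is a node of the compressed parse tree `T(w)` (obtained from `T̄(w)` by
dissolving nodes with exactly one child). -/
def InCompTree (h : ℕ → Sym α → Bool) (w : List (Sym α)) (v : TNode) : Prop :=
  IsNode h w v ∧ (v.level = 0 ∨ 2 ≤ degree h w v)

/-- `L` is a layer of the compressed parse tree `T(w)`, listed from left to right. -/
def IsCompLayer (h : ℕ → Sym α → Bool) (w : List (Sym α)) (L : List TNode) : Prop :=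
  (∀ v ∈ L, InCompTree h w v) ∧ chainFrom h w 0 L

/-- `u` is the parent of `v` in the compressed parse tree `T(w)`:
the nearest proper ancestor of `v` that is a node of `T(w)`. -/
def CompParent (h : ℕ → Sym α → Bool) (w : List (Sym α)) (u v : TNode) : Prop :=
  InCompTree h w u ∧ InCompTree h w v ∧ ProperAnc h w u v ∧
  ∀ z, InCompTree h w z → ProperAnc h w z v → Ancestor h w z u

/-- `D` is the decomposition of `w` corresponding to the layer `L` of `T̄(w)`. -/
def IsDecompOf (h : ℕ → Sym α → Bool) (w : List α) (D : List (Sym α)) (L : List TNode) : Prop :=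
  IsBarLayer h (embed w) L ∧ L.map (sigAt h (embed w)) = D.map some

/-- `D` is a decomposition of `w`. -/
def IsDecomp (h : ℕ → Sym α → Bool) (w : List α) (D : List (Sym α)) : Prop :=
  ∃ L, IsDecompOf h w D L

/-- `D` is a context-insensitive decomposition of `w`. -/
def IsCIDecomp (h : ℕ → Sym α → Bool) (w : List α) (D : List (Sym α)) : Prop :=
  ∃ L, IsDecompOf h w D L ∧ ∀ v ∈ L, ContextIns h w v

/-- `D` is a right context-insensitive decomposition of `w`. -/
def IsRightCIDecomp (h : ℕ → Sym α → Bool) (w : List α) (D : List (Sym α)) : Prop :=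
  ∃ L, IsDecompOf h w D L ∧ ∀ v ∈ L, RightCI h w v

/-- `D` is a left context-insensitive decomposition of `w`. -/
def IsLeftCIDecomp (h : ℕ → Sym α → Bool) (w : List α) (D : List (Sym α)) : Prop :=
  ∃ L, IsDecompOf h w D L ∧ ∀ v ∈ L, LeftCI h w v

/-- The level of a symbol. -/
noncomputable def symLevel (h : ℕ → Sym α → Bool) : Sym α → ℕ
  | .base _ => 0
  | .pow s _ => symLevel h s + 1
  | .pair s t =>
      sInf {l | l % 2 = 0 ∧ max (symLevel h s) (symLevel h t) < l ∧
                h (l / 2) s = false ∧ h (l / 2) t = true}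

/-- `S` is a consistent symbol: it occurs in `shrink^i(w)` for some nonempty `w ∈ Σ⁺`. -/
def Consistent (h : ℕ → Sym α → Bool) (S : Sym α) : Prop :=
  ∃ (w : List α) (i : ℕ), w ≠ [] ∧ S ∈ shrinkIter h i (embed w)

/-- Longest common prefix of two lists. -/
def lcp {β : Type} [DecidableEq β] : List β → List β → List β
  | a :: l, b :: m => if a = b then a :: lcp l m else []
  | _, _ => []

end DynStr
namespace DynStr

variable {α : Type} [DecidableEq α]

/-- The nodes of the trie `T̄ᵢ` of the strings `shrink^i(w)` for `w ∈ Wᵢ`,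
identified with their values (prefixes of the stored strings). -/
def trieNodes (h : ℕ → Sym α → Bool) (W : Finset (List α)) (i : ℕ) :
    Set (List (Sym α)) :=
  {p | ∃ w ∈ W, i ≤ depth h (embed w) ∧ p <+: shrinkIter h i (embed w)}

/-- `leafᵢ(w)`, the terminal node of `T̄ᵢ` with value `shrink^i(w)`. -/
def leafNode (h : ℕ → Sym α → Bool) (i : ℕ) (w : List α) : List (Sym α) :=
  shrinkIter h i (embed w)

/-- `b = link(a)` for a node `a` of `T̄ᵢ` (`i > 0`): `b` is the node of `T̄_{i-1}`
with `val(a) = shrinkᵢ(val(b))`. -/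
def IsLink (h : ℕ → Sym α → Bool) (W : Finset (List α)) (i : ℕ)
    (a b : List (Sym α)) : Prop :=
  a ∈ trieNodes h W i ∧ b ∈ trieNodes h W (i - 1) ∧ a = shrinkStep h i b

/-- `p` is a down-node of `T̄ᵢ`: the root, a branching node, or a terminal node. -/
def IsDown (h : ℕ → Sym α → Bool) (W : Finset (List α)) (i : ℕ)
    (p : List (Sym α)) : Prop :=
  p ∈ trieNodes h W i ∧
  (p = [] ∨
   (∃ S T : Sym α, S ≠ T ∧ p ++ [S] ∈ trieNodes h W i ∧ p ++ [T] ∈ trieNodes h W i) ∨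
   ∃ w ∈ W, i ≤ depth h (embed w) ∧ p = leafNode h i w)

/-- `p` is an up-node of `T̄ᵢ`: it is `link(a)` for some down-node `a` of `T̄_{i+1}`. -/
def IsUp (h : ℕ → Sym α → Bool) (W : Finset (List α)) (i : ℕ)
    (p : List (Sym α)) : Prop :=
  p ∈ trieNodes h W i ∧ ∃ a, IsDown h W (i + 1) a ∧ IsLink h W (i + 1) a p

/-- `p` is an explicit node of the partially compressed trie `Tᵢ`. -/
def IsExplicit (h : ℕ → Sym α → Bool) (W : Finset (List α)) (i : ℕ)
    (p : List (Sym α)) : Prop :=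
  IsDown h W i p ∨ IsUp h W i p

/-- `p` is the mount of `w` in `T̄ᵢ`: the lowest node of `T̄ᵢ` whose value is a
prefix of `shrink^i(w)`. -/
def Mount (h : ℕ → Sym α → Bool) (W : Finset (List α)) (i : ℕ)
    (w : List α) (p : List (Sym α)) : Prop :=
  p ∈ trieNodes h W i ∧ p <+: shrinkIter h i (embed w) ∧
  ∀ q ∈ trieNodes h W i, q <+: shrinkIter h i (embed w) → q <+: p

/-- `a` is the nearest explicit ancestor of the node `b` of `T̄ᵢ`. -/
def NearestExplAnc (h : ℕ → Sym α → Bool) (W : Finset (List α)) (i : ℕ)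
    (b a : List (Sym α)) : Prop :=
  IsExplicit h W i a ∧ a <+: b ∧ ∀ c, IsExplicit h W i c → c <+: b → c <+: a

/-- `d` is the nearest explicit descendant of the node `b` of `T̄ᵢ`. -/
def NearestExplDesc (h : ℕ → Sym α → Bool) (W : Finset (List α)) (i : ℕ)
    (b d : List (Sym α)) : Prop :=
  IsExplicit h W i d ∧ b <+: d ∧ ∀ c, IsExplicit h W i c → b <+: c → d <+: c

/-- `anch(s)`, the anchored string of a (positive-level) symbol. -/
def anch : Sym α → List α × List α
  | .base _ => ([], [])
  | .pair s t => (strSym s, strSym t)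
  | .pow s k => (strSym s, (List.replicate (k - 1) (strSym s)).flatten)

/-- The positions of the internal boundaries of the partition of `str(s)` induced
by the production rule of `s`. -/
def cuts : Sym α → List ℕ
  | .base _ => []
  | .pair s _ => [(strSym s).length]
  | .pow s k => (List.range (k - 1)).map fun j => (j + 1) * (strSym s).length

/-- `p` occurs in `str(s)` at (0-indexed) position `t`. -/
def OccAt (s : Sym α) (p : List α) (t : ℕ) : Prop :=
  t + p.length ≤ (strSym s).length ∧ ((strSym s).drop t).take p.length = p

/-- The occurrence of `p` in `str(s)` at position `t` is anchored: it crosses one of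
the internal boundaries of the partition induced by the production rule of `s`. -/
def AnchoredOccAt (s : Sym α) (p : List α) (t : ℕ) : Prop :=
  OccAt s p t ∧ ∃ c ∈ cuts s, t < c ∧ c < t + p.length

/-- The occurrence of `p` in `str(s)` at position `t` is anchored with main anchor
`pl|pr`: `pl` is the part of the occurrence before the first internal boundary it
crosses. -/
def MainAnchorAt (s : Sym α) (p : List α) (t : ℕ) (pl pr : List α) : Prop :=
  OccAt s p t ∧ ∃ c ∈ cuts s, t < c ∧ c < t + p.length ∧
    (∀ c' ∈ cuts s, t < c' → c ≤ c') ∧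
    pl = p.take (c - t) ∧ pr = p.drop (c - t)

end DynStr
namespace DynStr


section Aux
open List
set_option linter.unusedSectionVars false
variable {β : Type} [DecidableEq β]

def flatRuns (l : List (β × ℕ)) : List β := l.flatMap fun p => List.replicate p.2 p.1

lemma runs_pos : ∀ (u : List β), ∀ p ∈ runs u, 1 ≤ p.2 := by
  intro u
  induction u with
  | nil => simp [runs]
  | cons a l ih =>
    rcases hr : runs l with _ | ⟨⟨b, k⟩, rest⟩ <;> simp [runs, hr]
    · by_cases hab : a = b <;> simp [hab] <;>
        (intro x n hx; rcases hx with ⟨_, h2⟩ | hx)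
      · omega
      · exact ih (x, n) (by rw [hr]; simp [hx])
      · omega
      · rcases hx with ⟨h1, h2⟩ | hx
        · subst h1 h2; exact ih (x, n) (by rw [hr]; simp)
        · exact ih (x, n) (by rw [hr]; simp [hx])

lemma runs_flat : ∀ (u : List β), flatRuns (runs u) = u := by
  intro u
  induction u with
  | nil => simp [runs, flatRuns]
  | cons a l ih =>
    rcases hr : runs l with _ | ⟨⟨b, k⟩, rest⟩
    · rw [hr] at ih
      simp [flatRuns] at ih
      simp [runs, hr, flatRuns, ih]
    · rw [hr] at ih
      by_cases hab : a = b
      · subst hab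
        simp [runs, hr, flatRuns, List.replicate_succ] at ih ⊢
        simpa [flatRuns] using ih
      · simp [runs, hr, hab, flatRuns] at ih ⊢
        simpa [flatRuns] using ih

lemma runs_chain : ∀ (u : List β), List.Chain' (fun p q => p.1 ≠ q.1) (runs u) := by
  intro u
  induction u with
  | nil => simp [runs, List.Chain']
  | cons a l ih =>
    rcases hr : runs l with _ | ⟨⟨b, k⟩, rest⟩
    · simp [runs, hr, List.Chain']
    · rw [hr] at ih
      by_cases hab : a = b
      · have : Chain' (fun p q : β × ℕ => p.1 ≠ q.1) ((b, k + 1) :: rest) := by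
          rcases rest with _ | ⟨q, rest⟩
          · simp [List.Chain']
          · rw [List.Chain', List.isChain_cons_cons] at ih ⊢; exact ih
        simpa [runs, hr, hab] using this
      · have : Chain' (fun p q : β × ℕ => p.1 ≠ q.1) ((a,1) :: (b, k) :: rest) :=
          List.isChain_cons_cons.2 ⟨by simpa using hab, ih⟩
        simpa [runs, hr, hab] using this


lemma flatRuns_append (l r : List (β × ℕ)) :
    flatRuns (l ++ r) = flatRuns l ++ flatRuns r := by
  simp [flatRuns]

lemma flatRuns_infix {l r : List (β × ℕ)} (h : r <:+: l) :
    flatRuns r <:+: flatRuns l := by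
  obtain ⟨s, t, rfl⟩ := h
  exact ⟨flatRuns s, flatRuns t, by simp [flatRuns_append]⟩

lemma replicate_infix_flatRuns {l : List (β × ℕ)} {p : β × ℕ} (hp : p ∈ l) :
    List.replicate p.2 p.1 <:+: flatRuns l := by
  obtain ⟨s, t, rfl⟩ := List.append_of_mem hp
  refine ⟨flatRuns s, flatRuns t, ?_⟩
  simp [flatRuns_append, flatRuns]

lemma runs_run_infix {u : List β} {s : β} {k : ℕ} (hp : (s, k) ∈ runs u) (hk : 2 ≤ k) :
    [s, s] <:+: u := by
  have h1 : List.replicate k s <:+: u := by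
    simpa [runs_flat] using replicate_infix_flatRuns (l := runs u) hp
  refine List.IsPrefix.isInfix ?_ |>.trans h1
  obtain ⟨k, rfl⟩ : ∃ m, k = m + 2 := ⟨k - 2, by omega⟩
  exact ⟨List.replicate k s, by simp [List.replicate_succ]⟩

lemma runs_mem_mem {u : List β} {p : β × ℕ} (hp : p ∈ runs u) : p.1 ∈ u := by
  have h1 : List.replicate p.2 p.1 <:+: u := by
    simpa [runs_flat] using replicate_infix_flatRuns hp
  have hk := runs_pos u p hp
  exact h1.sublist.mem (by rw [List.mem_replicate]; exact ⟨by omega, rfl⟩)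

lemma map_prefix_inj {γ δ : Type} (f : γ → δ) :
    ∀ (xs ys : List γ), xs.map f <+: ys.map f →
      (∀ x ∈ xs, ∀ y ∈ ys, f x = f y → x = y) → xs <+: ys := by
  intro xs
  induction xs with
  | nil => intro ys _ _; exact List.nil_prefix
  | cons x xs ih =>
    intro ys hpre hinj
    cases ys with
    | nil => simp at hpre
    | cons y ys =>
      simp only [List.map_cons, List.cons_prefix_cons] at hpre
      have hxy : x = y := hinj x (by simp) y (by simp) hpre.1
      subst hxy
      exact List.cons_prefix_cons.2 ⟨rfl, ih ys hpre.2
        (fun a ha b hb => hinj a (by simp [ha]) b (by simp [hb]))⟩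

lemma runs_replicate_append {s : β} {v : List β} (k : ℕ) (hk : 1 ≤ k)
    (hv : ∀ b m rest, runs v = (b, m) :: rest → s ≠ b) :
    runs (List.replicate k s ++ v) = (s, k) :: runs v := by
  induction k with
  | zero => omega
  | succ k ih =>
    rw [List.replicate_succ, List.cons_append]
    rcases Nat.eq_zero_or_pos k with rfl | hk'
    · rw [List.replicate_zero, List.nil_append]
      rcases hr : runs v with _ | ⟨⟨b, m⟩, rest⟩
      · simp [runs, hr]
      · have := hv b m rest hr
        simp [runs, hr, this]
    · have h2 := ih hk'
      simp [runs, h2]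

lemma runs_flatRuns : ∀ (l : List (β × ℕ)), (∀ p ∈ l, 1 ≤ p.2) →
    List.Chain' (fun p q : β × ℕ => p.1 ≠ q.1) l → runs (flatRuns l) = l := by
  intro l
  induction l with
  | nil => intro _ _; simp [flatRuns, runs]
  | cons p l ih =>
    intro hpos hch
    have hl : runs (flatRuns l) = l :=
      ih (fun q hq => hpos q (by simp [hq])) hch.tail
    have : flatRuns (p :: l) = List.replicate p.2 p.1 ++ flatRuns l := by
      simp [flatRuns]
    rw [this, runs_replicate_append p.2 (hpos p (by simp)), hl]
    intro b m rest hr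
    rw [hl] at hr
    subst hr
    have := List.isChain_cons_cons.1 hch
    simpa using this.1

lemma infix_pair_iff {u : List β} {S T : β} :
    [S, T] <:+: u ↔ ∃ s t, u = s ++ S :: T :: t := by
  constructor
  · rintro ⟨s, t, rfl⟩; exact ⟨s, t, by simp⟩
  · rintro ⟨s, t, rfl⟩; exact ⟨s, t, by simp⟩

lemma pair_infix_map {γ δ : Type} (f : γ → δ) :
    ∀ (l : List γ) {S T : δ}, [S, T] <:+: l.map f →
      ∃ p q, [p, q] <:+: l ∧ S = f p ∧ T = f q := by
  intro l
  induction l with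
  | nil => intro S T h; simp [List.eq_nil_of_infix_nil] at h
  | cons a l ih =>
    intro S T h
    rw [List.map_cons, List.infix_cons_iff] at h
    rcases h with h | h
    · rcases l with _ | ⟨b, l⟩
      · rcases h with ⟨t, ht⟩; simp at ht
      · simp only [List.map_cons, List.cons_prefix_cons] at h
        obtain ⟨rfl, h2, _⟩ := h
        exact ⟨a, b, ⟨[], l, by simp⟩, rfl, h2⟩
    · obtain ⟨p, q, hinf, rfl, rfl⟩ := ih h
      exact ⟨p, q, hinf.trans (List.infix_cons_iff.2 (Or.inr (List.infix_refl _))), rfl, rfl⟩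

lemma seam_infix {u v : List β} (hu : u ≠ []) (hv : v ≠ []) :
    [u.getLast hu, v.head hv] <:+: u ++ v := by
  obtain ⟨u', a, rfl⟩ := (List.eq_nil_or_concat u).resolve_left hu
  rcases v with _ | ⟨b, v⟩
  · simp at hv
  · refine ⟨u', v, ?_⟩
    simp [List.getLast_append]


end Aux


section CompressLemmas
variable {α : Type} [DecidableEq α]

lemma compress_eq_nil_iff (g : Sym α → Bool) (u : List (Sym α)) :
    compress g u = [] ↔ u = [] := by
  rcases u with _ | ⟨a, _ | ⟨b, l⟩⟩ <;> simp [compress]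
  split <;> simp

lemma compress_length_le (g : Sym α → Bool) : ∀ u : List (Sym α),
    (compress g u).length ≤ u.length := by
  intro u
  induction u using compress.induct (g := g) with
  | case1 => simp [compress]
  | case2 a => simp [compress]
  | case3 a b l hc ih => simp [compress, hc]; omega
  | case4 a b l hc ih => simp [compress, hc] at ih ⊢; omega

def Born (g : Sym α → Bool) (u : List (Sym α)) (S : Sym α) : Prop :=
  ∃ a b, S = Sym.pair a b ∧ [a, b] <:+: u ∧ g a = false ∧ g b = true

lemma born_mono {g : Sym α → Bool} {u v : List (Sym α)} (h : u <:+: v) {S : Sym α} :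
    Born g u S → Born g v S := by
  rintro ⟨a, b, rfl, hinf, ha, hb⟩
  exact ⟨a, b, rfl, hinf.trans h, ha, hb⟩

lemma compress_mem (g : Sym α → Bool) : ∀ (u : List (Sym α)) (S : Sym α),
    S ∈ compress g u → S ∈ u ∨ Born g u S := by
  intro u
  induction u using compress.induct (g := g) with
  | case1 => simp [compress]
  | case2 a => simp [compress]
  | case3 a b l hc ih =>
    intro S hS
    simp only [compress, if_pos hc, List.mem_cons] at hS
    rcases hS with rfl | hS
    · exact Or.inr ⟨a, b, rfl, ⟨[], l, by simp⟩, hc.1, hc.2⟩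
    · rcases ih S hS with h | h
      · exact Or.inl (by simp [h])
      · exact Or.inr (born_mono ⟨[a, b], [], by simp⟩ h)
  | case4 a b l hc ih =>
    intro S hS
    simp only [compress, if_neg hc, List.mem_cons] at hS
    rcases hS with rfl | hS
    · exact Or.inl (by simp)
    · rcases ih S hS with h | h
      · exact Or.inl (by simp [h])
      · exact Or.inr (born_mono ⟨[a], [], by simp⟩ h)

lemma compress_head_cases (g : Sym α → Bool) (u : List (Sym α)) (T : Sym α)
    (rest : List (Sym α)) (h : compress g u = T :: rest) :
    (∃ t, u = T :: t) ∨ Born g u T := by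
  rcases u with _ | ⟨a, _ | ⟨b, l⟩⟩
  · simp [compress] at h
  · simp [compress] at h
    exact Or.inl ⟨[], by simp [h.1]⟩
  · by_cases hc : g a = false ∧ g b = true
    · simp only [compress, if_pos hc, List.cons.injEq] at h
      exact Or.inr ⟨a, b, h.1.symm, ⟨[], l, by simp⟩, hc.1, hc.2⟩
    · simp only [compress, if_neg hc, List.cons.injEq] at h
      exact Or.inl ⟨b :: l, by simp [h.1]⟩

lemma compress_adj (g : Sym α → Bool) : ∀ (u : List (Sym α)) (S T : Sym α),
    [S, T] <:+: compress g u →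
      Born g u S ∨ Born g u T ∨
      ([S, T] <:+: u ∧ ¬(g S = false ∧ g T = true)) := by
  intro u
  induction u using compress.induct (g := g) with
  | case1 => intro S T h; simp [compress, List.eq_nil_of_infix_nil] at h
  | case2 a =>
    intro S T h
    simp only [compress] at h
    rcases h with ⟨s, t, hst⟩
    rcases s with _ | ⟨x, s⟩ <;> simp at hst
  | case3 a b l hc ih =>
    intro S T h
    simp only [compress, if_pos hc] at h
    rw [List.infix_cons_iff] at h
    rcases h with h | h
    · rw [List.cons_prefix_cons] at h
      obtain ⟨rfl, h2⟩ := h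
      exact Or.inl ⟨a, b, rfl, ⟨[], l, by simp⟩, hc.1, hc.2⟩
    · rcases ih S T h with h' | h' | h'
      · exact Or.inl (born_mono ⟨[a, b], [], by simp⟩ h')
      · exact Or.inr (Or.inl (born_mono ⟨[a, b], [], by simp⟩ h'))
      · exact Or.inr (Or.inr ⟨h'.1.trans ⟨[a, b], [], by simp⟩, h'.2⟩)
  | case4 a b l hc ih =>
    intro S T h
    simp only [compress, if_neg hc] at h
    rw [List.infix_cons_iff] at h
    rcases h with h | h
    · rw [List.cons_prefix_cons] at h
      obtain ⟨rfl, h2⟩ := h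
      obtain ⟨rest, hrest⟩ : ∃ rest, compress g (b :: l) = T :: rest := by
        rcases h2 with ⟨t, ht⟩
        exact ⟨t, by simpa using ht.symm⟩
      rcases compress_head_cases g (b :: l) T rest hrest with ⟨t, ht⟩ | hB
      · obtain rfl : T = b := by cases ht; rfl
        exact Or.inr (Or.inr ⟨⟨[], l, by simp⟩, hc⟩)
      · exact Or.inr (Or.inl (born_mono ⟨[S], [], by simp⟩ hB))
    · rcases ih S T h with h' | h' | h'
      · exact Or.inl (born_mono ⟨[a], [], by simp⟩ h')
      · exact Or.inr (Or.inl (born_mono ⟨[a], [], by simp⟩ h'))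
      · exact Or.inr (Or.inr ⟨h'.1.trans ⟨[a], [], by simp⟩, h'.2⟩)

end CompressLemmas


section Invariant
variable {α : Type} [DecidableEq α]

lemma symLevel_base (h : ℕ → Sym α → Bool) (a : α) :
    symLevel h (Sym.base a) = 0 := by simp [symLevel]

lemma symLevel_pow (h : ℕ → Sym α → Bool) (s : Sym α) (k : ℕ) :
    symLevel h (Sym.pow s k) = symLevel h s + 1 := by simp [symLevel]

lemma symLevel_pair (h : ℕ → Sym α → Bool) (s t : Sym α) :
    symLevel h (Sym.pair s t) =
      sInf {l | l % 2 = 0 ∧ max (symLevel h s) (symLevel h t) < l ∧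
                h (l / 2) s = false ∧ h (l / 2) t = true} := by simp [symLevel]

/-- The structural invariant of the strings `shrink^j(w)`. -/
def SInv (h : ℕ → Sym α → Bool) (j : ℕ) (u : List (Sym α)) : Prop :=
  (∀ S ∈ u, symLevel h S ≤ j) ∧
  ∀ S T : Sym α, [S, T] <:+: u →
    (S = T → symLevel h S = j ∧ j % 2 = 0) ∧
    ∀ m, 1 ≤ m → 2 * m ≤ j →
      ¬(symLevel h S < 2 * m ∧ symLevel h T < 2 * m ∧ h m S = false ∧ h m T = true)

lemma born_level (h : ℕ → Sym α → Bool) {j m₀ : ℕ} {u : List (Sym α)}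
    (hInv : SInv h j u) {a b : Sym α} (hab : [a, b] <:+: u)
    (hj : j + 1 = 2 * m₀) (ha : h m₀ a = false) (hb : h m₀ b = true) :
    symLevel h (Sym.pair a b) = j + 1 := by
  have hamem : a ∈ u := hab.sublist.mem (by simp)
  have hbmem : b ∈ u := hab.sublist.mem (by simp)
  have hla := hInv.1 a hamem
  have hlb := hInv.1 b hbmem
  set X := {l | l % 2 = 0 ∧ max (symLevel h a) (symLevel h b) < l ∧
                h (l / 2) a = false ∧ h (l / 2) b = true} with hX
  have hmem : (j + 1) ∈ X := by
    refine ⟨by omega, by simp [Nat.max_lt]; omega, ?_, ?_⟩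
    · have : (j + 1) / 2 = m₀ := by omega
      rw [this]; exact ha
    · have : (j + 1) / 2 = m₀ := by omega
      rw [this]; exact hb
  have hsinf := Nat.sInf_mem ⟨j + 1, hmem⟩
  have hle : sInf X ≤ j + 1 := Nat.sInf_le hmem
  rw [symLevel_pair, ← hX]
  by_contra hne
  have hlt : sInf X < j + 1 := by omega
  obtain ⟨hl2, hlmax, hla', hlb'⟩ := hsinf
  rw [Nat.max_lt] at hlmax
  have h2 : 2 * (sInf X / 2) = sInf X := by omega
  have h1m : 1 ≤ sInf X / 2 := by omega
  exact (hInv.2 a b hab).2 (sInf X / 2) h1m (by omega)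
    ⟨by omega, by omega, hla', hlb'⟩

lemma run_level {h : ℕ → Sym α → Bool} {j : ℕ} {u : List (Sym α)}
    (hInv : SInv h j u) {p : Sym α × ℕ} (hp : p ∈ runs u) (h2 : 2 ≤ p.2) :
    symLevel h p.1 = j ∧ j % 2 = 0 :=
  (hInv.2 p.1 p.1 (runs_run_infix (by simpa using hp) h2)).1 rfl

lemma sinv_rle (h : ℕ → Sym α → Bool) {j : ℕ} {u : List (Sym α)}
    (hj1 : (j + 1) % 2 = 1) (hInv : SInv h j u) : SInv h (j + 1) (rle u) := by
  have hf : ∀ p : Sym α × ℕ, p ∈ runs u → 2 ≤ p.2 →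
      symLevel h (if 2 ≤ p.2 then Sym.pow p.1 p.2 else p.1) = j + 1 := by
    intro p hp h2
    rw [if_pos h2, symLevel_pow, (run_level hInv hp h2).1]
  constructor
  · intro S hS
    simp only [rle, List.mem_map] at hS
    obtain ⟨p, hp, rfl⟩ := hS
    by_cases h2 : 2 ≤ p.2
    · rw [hf p hp h2]
    · rw [if_neg h2]
      exact le_trans (hInv.1 p.1 (runs_mem_mem hp)) (by omega)
  · intro S T hST
    obtain ⟨p, q, hpq, rfl, rfl⟩ := pair_infix_map _ (runs u) hST
    have hp : p ∈ runs u := hpq.sublist.mem (by simp)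
    have hq : q ∈ runs u := hpq.sublist.mem (by simp)
    have hchain : p.1 ≠ q.1 := by
      have := (runs_chain u).infix hpq
      exact (List.isChain_cons_cons.1 this).1
    have hppos := runs_pos u p hp
    have hqpos := runs_pos u q hq
    constructor
    · intro hEq
      exfalso
      by_cases h2p : 2 ≤ p.2 <;> by_cases h2q : 2 ≤ q.2
      · rw [if_pos h2p, if_pos h2q] at hEq
        exact hchain (by injection hEq with h1 _)
      · rw [if_pos h2p, if_neg h2q] at hEq
        have h1 : symLevel h q.1 ≤ j := hInv.1 q.1 (runs_mem_mem hq)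
        rw [← hEq, symLevel_pow, (run_level hInv hp h2p).1] at h1
        omega
      · rw [if_neg h2p, if_pos h2q] at hEq
        have h1 : symLevel h p.1 ≤ j := hInv.1 p.1 (runs_mem_mem hp)
        rw [hEq, symLevel_pow, (run_level hInv hq h2q).1] at h1
        omega
      · rw [if_neg h2p, if_neg h2q] at hEq
        exact hchain hEq
    · rintro m hm hmle ⟨hS, hT, hhS, hhT⟩
      by_cases h2p : 2 ≤ p.2
      · rw [hf p hp h2p] at hS; omega
      by_cases h2q : 2 ≤ q.2
      · rw [hf q hq h2q] at hT; omega
      have hp1 : p.2 = 1 := by omega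
      have hq1 : q.2 = 1 := by omega
      have hadj : [p.1, q.1] <:+: u := by
        have h1 : flatRuns [p, q] <:+: flatRuns (runs u) := flatRuns_infix hpq
        rw [runs_flat] at h1
        simpa [flatRuns, hp1, hq1] using h1
      rw [if_neg h2p] at hS hhS
      rw [if_neg h2q] at hT hhT
      refine (hInv.2 p.1 q.1 hadj).2 m hm (by omega) ⟨hS, hT, hhS, hhT⟩

lemma sinv_compress (h : ℕ → Sym α → Bool) {j : ℕ} {u : List (Sym α)}
    (hj : (j + 1) % 2 = 0) (hInv : SInv h j u) :
    SInv h (j + 1) (compress (h ((j + 1) / 2)) u) := by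
  set m₀ := (j + 1) / 2 with hm₀def
  have hm₀ : j + 1 = 2 * m₀ := by omega
  have hbl : ∀ S, Born (h m₀) u S → symLevel h S = j + 1 := by
    rintro S ⟨a, b, rfl, hab, ha, hb⟩
    exact born_level h hInv hab hm₀ ha hb
  constructor
  · intro S hS
    rcases compress_mem (h m₀) u S hS with h' | h'
    · exact le_trans (hInv.1 S h') (by omega)
    · rw [hbl S h']
  · intro S T hST
    rcases compress_adj (h m₀) u S T hST with h' | h' | h'
    · constructor
      · intro _; exact ⟨hbl S h', hj⟩
      · rintro m hm hmle ⟨hS, _, _, _⟩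
        rw [hbl S h'] at hS; omega
    · constructor
      · intro hEq; rw [hEq]; exact ⟨hbl T h', hj⟩
      · rintro m hm hmle ⟨_, hT, _, _⟩
        rw [hbl T h'] at hT; omega
    · obtain ⟨hSTu, hnc⟩ := h'
      constructor
      · intro hEq
        exfalso
        have := (hInv.2 S T hSTu).1 hEq
        omega
      · rintro m hm hmle ⟨hS, hT, hhS, hhT⟩
        rcases Nat.lt_or_ge (2 * m) (j + 1) with hlt | hge
        · exact (hInv.2 S T hSTu).2 m hm (by omega) ⟨hS, hT, hhS, hhT⟩
        · have : m = m₀ := by omega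
          subst this
          exact hnc ⟨hhS, hhT⟩

lemma sinv_shrinkIter (h : ℕ → Sym α → Bool) (w : List α) :
    ∀ j, SInv h j (shrinkIter h j (embed w)) := by
  intro j
  induction j with
  | zero =>
    constructor
    · intro S hS
      simp only [shrinkIter, embed, List.mem_map] at hS
      obtain ⟨a, _, rfl⟩ := hS
      simp [symLevel_base]
    · intro S T hST
      have hS : S ∈ embed w := by
        have := hST.sublist.mem (show S ∈ [S, T] by simp)
        simpa [shrinkIter] using this
      simp only [embed, List.mem_map] at hS
      obtain ⟨a, _, rfl⟩ := hS
      exact ⟨fun _ => ⟨symLevel_base h a, rfl⟩, fun m hm hmle => by omega⟩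
  | succ j ih =>
    show SInv h (j + 1) (shrinkStep h (j + 1) (shrinkIter h j (embed w)))
    rw [shrinkStep]
    rcases Nat.mod_two_eq_zero_or_one (j + 1) with h0 | h1
    · rw [if_neg (by omega)]
      exact sinv_compress h h0 ih
    · rw [if_pos h1]
      exact sinv_rle h h1 ih

end Invariant


section Aux2
open List
set_option linter.unusedSectionVars false
variable {β : Type} [DecidableEq β]

lemma runs_eq_nil_iff {u : List β} : runs u = [] ↔ u = [] := by
  constructor
  · intro h
    have := runs_flat u
    rw [h] at this
    simpa [flatRuns] using this.symm
  · rintro rfl; simp [runs]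

lemma flatRuns_eq_nil {l : List (β × ℕ)} (hpos : ∀ p ∈ l, 1 ≤ p.2)
    (h : flatRuns l = []) : l = [] := by
  rcases l with _ | ⟨p, l⟩
  · rfl
  · exfalso
    have h1 := hpos p (by simp)
    rw [show flatRuns (p :: l) = List.replicate p.2 p.1 ++ flatRuns l from by simp [flatRuns]]
      at h
    rcases List.append_eq_nil_iff.1 h with ⟨h2, -⟩
    rw [List.replicate_eq_nil_iff] at h2
    omega

lemma flatRuns_getLast' {l' : List (β × ℕ)} {p : β × ℕ} (h1 : 1 ≤ p.2) :
    (flatRuns (l' ++ [p])).getLast? = some p.1 := by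
  have h2 : List.replicate p.2 p.1 = List.replicate (p.2 - 1) p.1 ++ [p.1] := by
    rw [← List.replicate_succ']
    congr 1
    omega
  rw [show flatRuns (l' ++ [p]) = flatRuns l' ++ List.replicate p.2 p.1 from
    by rw [flatRuns_append]; simp [flatRuns], h2, ← List.append_assoc,
    List.getLast?_concat]

lemma flatRuns_head {l : List (β × ℕ)} (hl : l ≠ []) (hpos : ∀ p ∈ l, 1 ≤ p.2) :
    (flatRuns l).head? = some ((l.head hl).1) := by
  rcases l with _ | ⟨p, l⟩
  · exact absurd rfl hl
  · have h1 := hpos p (by simp)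
    obtain ⟨k, hk⟩ : ∃ k, p.2 = k + 1 := ⟨p.2 - 1, by omega⟩
    rw [show flatRuns (p :: l) = List.replicate p.2 p.1 ++ flatRuns l from by simp [flatRuns],
      hk, List.replicate_succ]
    simp

lemma flatRuns_length_ones {l : List (β × ℕ)} (h1 : ∀ p ∈ l, p.2 = 1) :
    (flatRuns l).length = l.length := by
  induction l with
  | nil => simp [flatRuns]
  | cons p l ih =>
    rw [show flatRuns (p :: l) = List.replicate p.2 p.1 ++ flatRuns l from by simp [flatRuns]]
    simp [h1 p (by simp), ih fun q hq => h1 q (by simp [hq])]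

lemma rleLen_eq_length {u : List β} (hu : ∀ S : β, ¬ [S, S] <:+: u) :
    rleLen u = u.length := by
  have hall : ∀ p ∈ runs u, p.2 = 1 := by
    intro p hp
    have hpos := runs_pos u p hp
    by_contra h2
    exact hu p.1 (runs_run_infix (by simpa using hp) (by omega))
  rw [rleLen, ← flatRuns_length_ones hall, runs_flat]

end Aux2

section Align
open List
variable {α : Type} [DecidableEq α]

lemma pair_clash (h : ℕ → Sym α → Bool) {i : ℕ} (hi2 : i % 2 = 0) (hi0 : 0 < i)
    {lb la Lb La : List (Sym α)}
    (hb : lb <+: Lb) (ha : la <+: La)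
    (hIb : SInv h (i - 1) Lb) (hIa : SInv h (i - 1) La)
    {S a b : Sym α} (hS : S ∈ lb) (hSeq : S = Sym.pair a b)
    (hab : [a, b] <:+: la) (hga : h (i / 2) a = false) (hgb : h (i / 2) b = true) :
    False := by
  have hSL : symLevel h S ≤ i - 1 := hIb.1 S (hb.sublist.mem hS)
  have habL : [a, b] <:+: La := hab.trans ha.isInfix
  have hamem : a ∈ La := habL.sublist.mem (by simp)
  have hbmem : b ∈ La := habL.sublist.mem (by simp)
  have hla := hIa.1 a hamem
  have hlb := hIa.1 b hbmem
  set X := {l | l % 2 = 0 ∧ max (symLevel h a) (symLevel h b) < l ∧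
                h (l / 2) a = false ∧ h (l / 2) b = true} with hX
  have hmem : i ∈ X := ⟨hi2, by simp [Nat.max_lt]; omega, hga, hgb⟩
  have hsinf := Nat.sInf_mem ⟨i, hmem⟩
  have hSX : symLevel h S = sInf X := by rw [hSeq, symLevel_pair, ← hX]
  obtain ⟨hl2, hlmax, hla', hlb'⟩ := hsinf
  rw [Nat.max_lt] at hlmax
  have h1m : 1 ≤ sInf X / 2 := by omega
  exact (hIa.2 a b habL).2 (sInf X / 2) h1m (by omega) ⟨by omega, by omega, hla', hlb'⟩

lemma compress_align (g : Sym α → Bool) :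
    ∀ (n : ℕ) (lb la : List (Sym α)), lb.length + la.length ≤ n →
      (∀ S a b, S ∈ lb → S = Sym.pair a b → [a, b] <:+: la →
        g a = false → g b = true → False) →
      (∀ S a b, S ∈ la → S = Sym.pair a b → [a, b] <:+: lb →
        g a = false → g b = true → False) →
      compress g lb <+: compress g la →
      lb <+: la ∧
        compress g (la.drop lb.length) = (compress g la).drop (compress g lb).length := by
  intro n
  induction n with
  | zero =>
    intro lb la hlen _ _ _
    have hb : lb = [] := by
      cases lb
      · rfl
      · simp at hlen
    have ha : la = [] := by
      cases la
      · rfl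
      · simp at hlen
    subst hb; subst ha
    exact ⟨List.nil_prefix, by simp [compress]⟩
  | succ n ih =>
    intro lb la hlen H1 H2 hpre
    rcases lb with _ | ⟨x, lb'⟩
    · exact ⟨List.nil_prefix, by simp [compress]⟩
    rcases lb' with _ | ⟨x', lb''⟩
    · -- lb = [x]
      rcases la with _ | ⟨y, la'⟩
      · simp [compress] at hpre
      rcases la' with _ | ⟨z, l⟩
      · -- la = [y]
        simp only [compress, List.cons_prefix_cons] at hpre
        obtain ⟨rfl, -⟩ := hpre
        exact ⟨by simp, by simp [compress]⟩
      · by_cases hca : g y = false ∧ g z = true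
        · exfalso
          simp only [compress, if_pos hca, List.cons_prefix_cons] at hpre
          exact H1 x y z (by simp) hpre.1 ⟨[], l, by simp⟩ hca.1 hca.2
        · simp only [compress, if_neg hca, List.cons_prefix_cons] at hpre
          obtain ⟨rfl, -⟩ := hpre
          refine ⟨List.cons_prefix_cons.2 ⟨rfl, List.nil_prefix⟩, ?_⟩
          simp [compress, if_neg hca]
    · by_cases hcb : g x = false ∧ g x' = true
      · -- compress lb = pair x x' :: compress lb''
        rcases la with _ | ⟨y, la'⟩
        · simp [compress, if_pos hcb] at hpre
        rcases la' with _ | ⟨z, l⟩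
        · exfalso
          simp only [compress, if_pos hcb, List.cons_prefix_cons] at hpre
          exact H2 y x x' (by simp) hpre.1.symm ⟨[], lb'', by simp⟩ hcb.1 hcb.2
        · by_cases hca : g y = false ∧ g z = true
          · simp only [compress, if_pos hcb, if_pos hca, List.cons_prefix_cons] at hpre
            obtain ⟨heq, hpre'⟩ := hpre
            obtain ⟨rfl, rfl⟩ : x = y ∧ x' = z := by
              injection heq with h1 h2; exact ⟨h1, h2⟩
            obtain ⟨hp, hal⟩ := ih lb'' l (by simp at hlen ⊢; omega)
              (fun S a b hS hSe hab hga hgb =>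
                H1 S a b (by simp [hS]) hSe (hab.trans ⟨[x, x'], [], by simp⟩) hga hgb)
              (fun S a b hS hSe hab hga hgb =>
                H2 S a b (by simp [hS]) hSe (hab.trans ⟨[x, x'], [], by simp⟩) hga hgb)
              hpre'
            refine ⟨List.cons_prefix_cons.2 ⟨rfl, List.cons_prefix_cons.2 ⟨rfl, hp⟩⟩, ?_⟩
            simpa [compress, if_pos hcb, if_pos hca] using hal
          · exfalso
            simp only [compress, if_pos hcb, if_neg hca, List.cons_prefix_cons] at hpre
            exact H2 y x x' (by simp) hpre.1.symm ⟨[], lb'', by simp⟩ hcb.1 hcb.2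
      · -- compress lb = x :: compress (x' :: lb'')
        rcases la with _ | ⟨y, la'⟩
        · simp [compress, if_neg hcb] at hpre
        rcases la' with _ | ⟨z, l⟩
        · exfalso
          simp only [compress, if_neg hcb, List.cons_prefix_cons] at hpre
          obtain ⟨-, hpre'⟩ := hpre
          have := List.prefix_nil.1 hpre'
          rw [compress_eq_nil_iff] at this
          simp at this
        · by_cases hca : g y = false ∧ g z = true
          · exfalso
            simp only [compress, if_neg hcb, if_pos hca, List.cons_prefix_cons] at hpre
            exact H1 x y z (by simp) hpre.1 ⟨[], l, by simp⟩ hca.1 hca.2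
          · simp only [compress, if_neg hcb, if_neg hca, List.cons_prefix_cons] at hpre
            obtain ⟨rfl, hpre'⟩ := hpre
            obtain ⟨hp, hal⟩ := ih (x' :: lb'') (z :: l) (by simp at hlen ⊢; omega)
              (fun S a b hS hSe hab hga hgb =>
                H1 S a b (by simp [List.mem_cons] at hS ⊢; tauto) hSe
                  (hab.trans ⟨[x], [], by simp⟩) hga hgb)
              (fun S a b hS hSe hab hga hgb =>
                H2 S a b (by simp [List.mem_cons] at hS ⊢; tauto) hSe
                  (hab.trans ⟨[x], [], by simp⟩) hga hgb)
              hpre'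
            refine ⟨List.cons_prefix_cons.2 ⟨rfl, hp⟩, ?_⟩
            simpa [compress, if_neg hcb, if_neg hca] using hal

lemma no_eq_adj {h : ℕ → Sym α → Bool} {j : ℕ} {L : List (Sym α)}
    (hI : SInv h j L) (hodd : j % 2 = 1) :
    ∀ S : Sym α, ¬ [S, S] <:+: L := by
  intro S hSS
  have := (hI.2 S S hSS).1 rfl
  omega

lemma align_even (h : ℕ → Sym α → Bool) {i : ℕ} (hpar : i % 2 = 0) (hi : 0 < i)
    {lb la Lb La : List (Sym α)} (hb : lb <+: Lb) (ha : la <+: La)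
    (hIb : SInv h (i - 1) Lb) (hIa : SInv h (i - 1) La)
    (hpre : compress (h (i / 2)) lb <+: compress (h (i / 2)) la) (hlbne : lb ≠ la) :
    (lb <+: la ∧ lb ≠ la) ∧
      (lb ≠ [] → lb.getLast? ≠ (la.drop lb.length).head?) ∧
      (compress (h (i / 2)) la).length - (compress (h (i / 2)) lb).length ≤
        rleLen (la.drop lb.length) := by
  have hjodd : (i - 1) % 2 = 1 := by omega
  obtain ⟨hp, hal⟩ := compress_align (h (i / 2)) (lb.length + la.length) lb la le_rfl
    (fun S a b hS hSe hab hga hgb => pair_clash h hpar hi hb ha hIb hIa hS hSe hab hga hgb)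
    (fun S a b hS hSe hab hga hgb => pair_clash h hpar hi ha hb hIa hIb hS hSe hab hga hgb)
    hpre
  set rest := la.drop lb.length with hrest
  have hsplit : la = lb ++ rest := (List.prefix_iff_eq_append.1 hp).symm
  have hrestne : rest ≠ [] := by
    intro h0
    exact hlbne (by rw [hsplit, h0, List.append_nil])
  have hrinf : ∀ S : Sym α, ¬ [S, S] <:+: rest := by
    intro S hSS
    exact no_eq_adj hIa hjodd S
      ((hSS.trans (List.drop_suffix _ _).isInfix).trans ha.isInfix)
  refine ⟨⟨hp, hlbne⟩, ?_, ?_⟩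
  · intro hlbne'
    rw [List.getLast?_eq_getLast hlbne', List.head?_eq_head hrestne]
    intro hcon
    have heq : lb.getLast hlbne' = rest.head hrestne := by
      injection hcon
    have hseam : [lb.getLast hlbne', rest.head hrestne] <:+: la := by
      rw [hsplit]
      exact seam_infix hlbne' hrestne
    rw [heq] at hseam
    exact no_eq_adj hIa hjodd _ (hseam.trans ha.isInfix)
  · have h1 : (compress (h (i / 2)) rest).length
        = (compress (h (i / 2)) la).length - (compress (h (i / 2)) lb).length := by
      rw [hal, List.length_drop]
    rw [rleLen_eq_length hrinf, ← h1]
    exact compress_length_le _ _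

end Align


section AlignOdd
open List
variable {α : Type} [DecidableEq α]

lemma align_odd (h : ℕ → Sym α → Bool) {i : ℕ}
    {lb la Lb La : List (Sym α)} (hb : lb <+: Lb) (ha : la <+: La)
    (hIb : SInv h (i - 1) Lb) (hIa : SInv h (i - 1) La)
    (hpre : rle lb <+: rle la) (hlbne : lb ≠ la) :
    (lb <+: la ∧ lb ≠ la) ∧
      (lb ≠ [] → lb.getLast? ≠ (la.drop lb.length).head?) ∧
      (rle la).length - (rle lb).length ≤ rleLen (la.drop lb.length) := by
  set j := i - 1 with hj
  have hinj : ∀ p ∈ runs lb, ∀ q ∈ runs la,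
      (if 2 ≤ p.2 then Sym.pow p.1 p.2 else p.1) =
        (if 2 ≤ q.2 then Sym.pow q.1 q.2 else q.1) → p = q := by
    intro p hp q hq hfeq
    have hpmem : p.1 ∈ Lb := hb.sublist.mem (runs_mem_mem hp)
    have hqmem : q.1 ∈ La := ha.sublist.mem (runs_mem_mem hq)
    by_cases h2p : 2 ≤ p.2 <;> by_cases h2q : 2 ≤ q.2
    · rw [if_pos h2p, if_pos h2q] at hfeq
      injection hfeq with e1 e2
      exact Prod.ext e1 e2
    · exfalso
      rw [if_pos h2p, if_neg h2q] at hfeq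
      have hrun : [p.1, p.1] <:+: Lb :=
        (runs_run_infix (by simpa using hp) h2p).trans hb.isInfix
      have hlev := (hIb.2 p.1 p.1 hrun).1 rfl
      have hle : symLevel h q.1 ≤ j := hIa.1 q.1 hqmem
      rw [← hfeq, symLevel_pow, hlev.1] at hle
      omega
    · exfalso
      rw [if_neg h2p, if_pos h2q] at hfeq
      have hrun : [q.1, q.1] <:+: La :=
        (runs_run_infix (by simpa using hq) h2q).trans ha.isInfix
      have hlev := (hIa.2 q.1 q.1 hrun).1 rfl
      have hle : symLevel h p.1 ≤ j := hIb.1 p.1 hpmem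
      rw [hfeq, symLevel_pow, hlev.1] at hle
      omega
    · rw [if_neg h2p, if_neg h2q] at hfeq
      have e1 := runs_pos lb p hp
      have e2 := runs_pos la q hq
      exact Prod.ext hfeq (by omega)
  have hrpre : runs lb <+: runs la :=
    map_prefix_inj _ (runs lb) (runs la) (by simpa [rle] using hpre) hinj
  obtain ⟨rr, hrr⟩ := hrpre
  have hflat : la = lb ++ flatRuns rr := by
    conv_lhs => rw [← runs_flat la]
    rw [← hrr, flatRuns_append, runs_flat]
  have hp : lb <+: la := ⟨flatRuns rr, hflat.symm⟩
  have hrest : la.drop lb.length = flatRuns rr := by rw [hflat, List.drop_left]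
  have hposla : ∀ p ∈ runs la, 1 ≤ p.2 := runs_pos la
  have hposrr : ∀ p ∈ rr, 1 ≤ p.2 := fun p hpmem => hposla p (by rw [← hrr]; simp [hpmem])
  have hchainrr : List.Chain' (fun p q : Sym α × ℕ => p.1 ≠ q.1) rr :=
    (runs_chain la).infix ⟨runs lb, [], by simp [hrr]⟩
  refine ⟨⟨hp, hlbne⟩, ?_, ?_⟩
  · intro hlbne'
    have hfrne : flatRuns rr ≠ [] := by
      intro h0
      exact hlbne (by rw [hflat, h0, List.append_nil])
    have hrrne : rr ≠ [] := fun h0 => hfrne (by rw [h0]; simp [flatRuns])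
    have hrbne : runs lb ≠ [] := fun h0 => hlbne' (runs_eq_nil_iff.1 h0)
    obtain ⟨l', p, hcat⟩ := (List.eq_nil_or_concat (runs lb)).resolve_left hrbne
    rw [List.concat_eq_append] at hcat
    obtain ⟨q, rr', rfl⟩ : ∃ q rr', rr = q :: rr' := by
      rcases rr with _ | ⟨q, rr'⟩
      · exact absurd rfl hrrne
      · exact ⟨q, rr', rfl⟩
    have hseam : [p, q] <:+: runs la := ⟨l', rr', by rw [← hrr, hcat]; simp⟩
    have hne' : p.1 ≠ q.1 := (List.isChain_cons_cons.1 ((runs_chain la).infix hseam)).1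
    have hlast : lb.getLast? = some p.1 := by
      conv_lhs => rw [← runs_flat lb, hcat]
      exact flatRuns_getLast' (runs_pos lb p (by rw [hcat]; simp))
    have hhead : (la.drop lb.length).head? = some q.1 := by
      rw [hrest]
      have := flatRuns_head (l := q :: rr') (by simp) hposrr
      simpa using this
    rw [hlast, hhead]
    intro hcon
    exact hne' (by injection hcon)
  · have h3 : (rle la).length - (rle lb).length = rr.length := by
      have hlen : (runs la).length = (runs lb).length + rr.length := by rw [← hrr]; simp
      simp [rle, hlen]
    have h4 : rleLen (la.drop lb.length) = rr.length := by
      rw [hrest, rleLen, runs_flatRuns rr hposrr hchainrr]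
    omega

end AlignOdd

/-- For `i > 0` and nodes `A, B` of `T̄ᵢ` with `A` a proper descendant
of `B`: `link(A)` is a proper descendant of `link(B)`; if `val(link(B))` is nonempty,
its last symbol differs from the first symbol of `val(link(B), link(A))`; and
`|RLE(val(link(B), link(A)))| ≥ |val(B, A)|`. -/
theorem link_preserves_descent
    {α : Type} [DecidableEq α] (h : ℕ → Sym α → Bool) (W : Finset (List α))
    (i : ℕ) (hi : 0 < i) (A B : List (Sym α))
    (hA : A ∈ trieNodes h W i) (hB : B ∈ trieNodes h W i)
    (hdesc : B <+: A) (hne : B ≠ A)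
    (la lb : List (Sym α)) (hla : IsLink h W i A la) (hlb : IsLink h W i B lb) :
    (lb <+: la ∧ lb ≠ la) ∧
    (lb ≠ [] → lb.getLast? ≠ (la.drop lb.length).head?) ∧
    A.length - B.length ≤ rleLen (la.drop lb.length) := by
  obtain ⟨hAmem, hlaT, hAeq⟩ := hla
  obtain ⟨hBmem, hlbT, hBeq⟩ := hlb
  obtain ⟨wa, hwaW, hda, hpa⟩ := hlaT
  obtain ⟨wb, hwbW, hdb, hpb⟩ := hlbT
  have hIa := sinv_shrinkIter h wa (i - 1)
  have hIb := sinv_shrinkIter h wb (i - 1)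
  have hlbne : lb ≠ la := by
    rintro rfl
    exact hne (by rw [hBeq, hAeq])
  subst hAeq
  subst hBeq
  rcases Nat.mod_two_eq_zero_or_one i with hpar | hpar
  · simp only [shrinkStep, if_neg (show ¬ i % 2 = 1 by omega)] at hdesc ⊢
    exact align_even h hpar hi hpb hpa hIb hIa hdesc hlbne
  · simp only [shrinkStep, if_pos hpar] at hdesc ⊢
    exact align_odd h hpb hpa hIb hIa hdesc hlbne

end DynStr
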